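/- arXiv:1003.6058 — 14 statements merged into one kernel-verified Lean document; each statement's English description precedes it below -/
import Mathlib

section
/- A topological space X is O-[μ,λ]-compact if and only if for every sequence (P_α)_{α∈λ} of (arbitrary) subsets of X, whenever for every Z ⊆ λ with |Z| < μ there exists a nonempty open set O_Z with ⋂_{α∈Z} P_α ⊇ O_Z, then ⋂_{α∈λ} closure(P_α) ≠ ∅. -/
open Cardinal Set

def OCompact (X : Type*) [TopologicalSpace X] (μ lam : Cardinal) : Prop :=
  ∀ C : lam.out → Set X, (∀ α, IsClosed (C α)) →
    (∀ Z : Set lam.out, #Z < μ →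
      ∃ O : Set X, IsOpen O ∧ O.Nonempty ∧ O ⊆ ⋂ α ∈ Z, C α) →
    (⋂ α, C α).Nonempty

theorem stmt3 (X : Type*) [TopologicalSpace X] (μ lam : Cardinal)
    (hμ : ℵ₀ ≤ μ) (hml : μ ≤ lam) :
    OCompact X μ lam ↔
      ∀ P : lam.out → Set X,
        (∀ Z : Set lam.out, #Z < μ →
          ∃ O : Set X, IsOpen O ∧ O.Nonempty ∧ O ⊆ ⋂ α ∈ Z, P α) →
        (⋂ α, closure (P α)).Nonempty := by
  constructor
  · intro h P hP
    refine h (fun α => closure (P α)) (fun α => isClosed_closure) ?_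
    intro Z hZ
    obtain ⟨O, hO, hOne, hOsub⟩ := hP Z hZ
    exact ⟨O, hO, hOne, hOsub.trans (by
      gcongr with α hα
      exact subset_closure)⟩
  · intro h C hC hP
    have := h C hP
    simpa [fun α => (hC α).closure_eq] using this
end

section
/- A topological space X is O-[μ,λ]-compact if and only if for every family {O_Z : Z ∈ S_μ(λ)} of nonempty open sets of X indexed by the subsets of λ of cardinality less than μ, one has ⋂_{α∈λ} closure(⋃{O_Z : Z ∈ S_μ(λ), α ∈ Z}) ≠ ∅. -/
open Cardinal Set

theorem stmt4 (X : Type*) [TopologicalSpace X] (μ lam : Cardinal)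
    (hμ : ℵ₀ ≤ μ) (hml : μ ≤ lam) :
    OCompact X μ lam ↔
      ∀ O : {Z : Set lam.out // #Z < μ} → Set X,
        (∀ Z, IsOpen (O Z) ∧ (O Z).Nonempty) →
        (⋂ α : lam.out,
          closure (⋃ (Z : {Z : Set lam.out // #Z < μ}) (_ : α ∈ Z.1), O Z)).Nonempty := by
  constructor
  · intro h O hO
    apply h
    · intro α; exact isClosed_closure
    · intro Z hZ
      refine ⟨O ⟨Z, hZ⟩, (hO _).1, (hO _).2, ?_⟩
      intro x hx
      simp only [mem_iInter]
      intro α hα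
      apply subset_closure
      exact mem_iUnion₂.2 ⟨⟨Z, hZ⟩, hα, hx⟩
  · intro h C hC hex
    choose O hOopen hOne hOsub using fun Z : {Z : Set lam.out // #Z < μ} => hex Z.1 Z.2
    obtain ⟨x, hx⟩ := h O fun Z => ⟨hOopen Z, hOne Z⟩
    refine ⟨x, mem_iInter.2 fun α => ?_⟩
    have hsub : (⋃ (Z : {Z : Set lam.out // #Z < μ}) (_ : α ∈ Z.1), O Z) ⊆ C α := by
      refine iUnion₂_subset fun Z hα => ?_
      exact (hOsub Z).trans fun y hy => by
        simpa using mem_iInter₂.1 hy α hα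
    exact (hC α).closure_subset_iff.2 hsub (mem_iInter.1 hx α)
end

section
/- A topological space X is O-[μ,λ]-compact if and only if for every family {O_Z : Z ∈ S_μ(λ)} of nonempty open sets of X, setting Q_W = ⋃{O_Z : Z ∈ S_μ(λ), Z ⊇ W} for every finite subset W of λ, one has ⋂{closure(Q_W) : W a finite subset of λ} ≠ ∅. -/
open Cardinal Set

lemma aux_card {α : Type*} {μ : Cardinal} (hμ : ℵ₀ ≤ μ)
    (Z : Set α) (hZ : #Z < μ) (f : α → Finset α) :
    #(⋃ a ∈ Z, ((f a : Set α))) < μ := by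
  rcases lt_or_ge (#Z) ℵ₀ with h | h
  · have hfin : Z.Finite := by
      rwa [Cardinal.lt_aleph0_iff_set_finite] at h
    have : (⋃ a ∈ Z, ((f a : Set α))).Finite :=
      hfin.biUnion (fun a _ => (f a).finite_toSet)
    exact lt_of_lt_of_le this.lt_aleph0 hμ
  · calc #(⋃ a ∈ Z, ((f a : Set α)))
        ≤ #Z * ⨆ a : Z, #((f a : Set α)) := Cardinal.mk_biUnion_le _ _
      _ ≤ #Z * ℵ₀ := by
          refine mul_le_mul_right (ciSup_le' fun a => ?_) _
          exact ((f a.1).finite_toSet.lt_aleph0).le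
      _ = #Z := Cardinal.mul_aleph0_eq h
      _ < μ := hZ

theorem stmt5 (X : Type*) [TopologicalSpace X] (μ lam : Cardinal)
    (hμ : ℵ₀ ≤ μ) (hml : μ ≤ lam) :
    OCompact X μ lam ↔
      ∀ O : {Z : Set lam.out // #Z < μ} → Set X,
        (∀ Z, IsOpen (O Z) ∧ (O Z).Nonempty) →
        (⋂ W : Finset lam.out,
          closure (⋃ (Z : {Z : Set lam.out // #Z < μ}) (_ : ↑W ⊆ Z.1), O Z)).Nonempty := by
  have hinf : Infinite lam.out := by
    rw [Cardinal.infinite_iff, Cardinal.mk_out]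
    exact hμ.trans hml
  constructor
  · intro hc O hO
    set Q : Finset lam.out → Set X :=
      fun W => ⋃ (Z : {Z : Set lam.out // #Z < μ}) (_ : ↑W ⊆ Z.1), O Z with hQ
    obtain ⟨e⟩ : Nonempty (Finset lam.out ≃ lam.out) := by
      rw [← Cardinal.eq, Cardinal.mk_out, Cardinal.mk_finset_of_infinite]
      exact Cardinal.mk_out lam
    have key := hc (fun α => closure (Q (e.symm α))) (fun α => isClosed_closure) ?_
    · obtain ⟨x, hx⟩ := key
      refine ⟨x, Set.mem_iInter.mpr fun W => ?_⟩
      have := Set.mem_iInter.mp hx (e W)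
      simpa using this
    · intro Z hZ
      have hW' : #(⋃ α ∈ Z, (((e.symm α : Finset lam.out) : Set lam.out))) < μ :=
        aux_card hμ Z hZ _
      refine ⟨O ⟨_, hW'⟩, (hO _).1, (hO _).2, ?_⟩
      refine Set.subset_iInter₂ fun α hα => ?_
      refine subset_trans ?_ subset_closure
      refine Set.subset_iUnion₂ (s := fun Z _ => O Z) ⟨_, hW'⟩ ?_
      exact Set.subset_biUnion_of_mem (u := fun β => ((e.symm β : Finset lam.out) : Set lam.out)) hα
  · intro h C hCl hO
    choose O hOopen hOne hOsub using hO
    obtain ⟨x, hx⟩ := h (fun Z => O Z.1 Z.2) (fun Z => ⟨hOopen _ _, hOne _ _⟩)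
    refine ⟨x, Set.mem_iInter.mpr fun α => ?_⟩
    have hxα := Set.mem_iInter.mp hx {α}
    have hsub : closure (⋃ (Z : {Z : Set lam.out // #Z < μ})
        (_ : ↑({α} : Finset lam.out) ⊆ Z.1), O Z.1 Z.2) ⊆ C α := by
      refine closure_minimal (Set.iUnion₂_subset fun Z hZ y hy => ?_) (hCl α)
      exact Set.mem_iInter₂.mp (hOsub Z.1 Z.2 hy) α (hZ (by simp))
    exact hsub hxα
end

section
/- A topological space X is O-[μ,λ]-compact if and only if for every family {O_Z : Z ∈ S_μ(λ)} of nonempty open sets of X, there exists an ultrafilter D over S_μ(λ) that covers λ (i.e., {Z ∈ S_μ(λ) : α ∈ Z} ∈ D for every α ∈ λ) such that the family {O_Z} has a D-limit point in X. -/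
open Cardinal Set

/-- `x` is a `D`-limit point of the family `Y`. -/
def IsDLimit {I X : Type*} [TopologicalSpace X] (D : Ultrafilter I)
    (Y : I → Set X) (x : X) : Prop :=
  ∀ U ∈ nhds x, {i | (Y i ∩ U).Nonempty} ∈ D

theorem stmt6 (X : Type*) [TopologicalSpace X] (μ lam : Cardinal)
    (hμ : ℵ₀ ≤ μ) (hml : μ ≤ lam) :
    OCompact X μ lam ↔
      ∀ O : {Z : Set lam.out // #Z < μ} → Set X,
        (∀ Z, IsOpen (O Z) ∧ (O Z).Nonempty) →
        ∃ D : Ultrafilter {Z : Set lam.out // #Z < μ},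
          (∀ α : lam.out, {Z : {Z : Set lam.out // #Z < μ} | α ∈ Z.1} ∈ D) ∧
          ∃ x : X, IsDLimit D O x := by
  have hinf : Infinite lam.out := by
    rw [Cardinal.infinite_iff, mk_out]; exact hμ.trans hml
  constructor
  · -- forward direction
    intro h O hO
    obtain ⟨e⟩ : Nonempty (Finset lam.out ≃ lam.out) := by
      rw [← Cardinal.eq]; exact mk_finset_of_infinite _
    set C : lam.out → Set X :=
      fun β => closure (⋃ Z ∈ {Z : {Z : Set lam.out // #Z < μ} | ↑(e.symm β) ⊆ Z.1}, O Z)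
      with hCdef
    have hcap : ∀ Z₀ : Set lam.out, #Z₀ < μ →
        ∃ O' : Set X, IsOpen O' ∧ O'.Nonempty ∧ O' ⊆ ⋂ β ∈ Z₀, C β := by
      intro Z₀ hZ₀
      set Zstar : Set lam.out := ⋃ β ∈ Z₀, ↑(e.symm β) with hZs
      have hZstar : #Zstar < μ := by
        rcases lt_or_ge (#Z₀) ℵ₀ with hlt | hle
        · have hfin : Zstar.Finite :=
            Set.Finite.biUnion (lt_aleph0_iff_set_finite.mp hlt)
              (fun β _ => (e.symm β).finite_toSet)
          exact lt_of_lt_of_le (lt_aleph0_iff_set_finite.mpr hfin) hμ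
        · have h1 : #Zstar ≤ #Z₀ * ℵ₀ := by
            refine le_trans (mk_biUnion_le _ _) ?_
            refine mul_le_mul_right ?_ _
            exact ciSup_le' fun β => le_of_lt (by
              simpa using lt_aleph0_of_finite ((e.symm (β : lam.out)) : Set lam.out))
          have h2 : #Z₀ * ℵ₀ = #Z₀ := by
            rw [Cardinal.mul_eq_max hle le_rfl, max_eq_left hle]
          rw [h2] at h1
          exact lt_of_le_of_lt h1 hZ₀
      refine ⟨O ⟨Zstar, hZstar⟩, (hO _).1, (hO _).2, ?_⟩
      intro y hy
      refine mem_iInter₂.2 fun β hβ => ?_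
      refine subset_closure ?_
      have hsub : ↑(e.symm β) ⊆ Zstar := by
        rw [hZs]
        exact subset_biUnion_of_mem (u := fun β => ((e.symm β : Finset lam.out) : Set lam.out)) hβ
      exact mem_biUnion hsub hy
    obtain ⟨x, hx⟩ := h C (fun β => isClosed_closure) hcap
    have key : ∀ (F : Finset lam.out) (U : Set X), U ∈ nhds x →
        ∃ Z : {Z : Set lam.out // #Z < μ}, ↑F ⊆ Z.1 ∧ (O Z ∩ U).Nonempty := by
      intro F U hU
      have hxC : x ∈ C (e F) := mem_iInter.mp hx _
      rw [hCdef] at hxC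
      obtain ⟨y, hyU, hy⟩ := mem_closure_iff_nhds.mp hxC U hU
      rw [e.symm_apply_apply] at hy
      obtain ⟨Z, hZ, hyO⟩ := mem_iUnion₂.mp hy
      exact ⟨Z, hZ, ⟨y, hyO, hyU⟩⟩
    -- build the filter
    set g : lam.out ⊕ {U : Set X // U ∈ nhds x} → Set {Z : Set lam.out // #Z < μ} :=
      Sum.elim (fun α => {Z : {Z : Set lam.out // #Z < μ} | α ∈ Z.1})
        (fun U => {Z : {Z : Set lam.out // #Z < μ} | (O Z ∩ U.1).Nonempty}) with hg
    have hFIP : ∀ t, t ⊆ Set.range g → t.Finite → (⋂₀ t).Nonempty := by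
      intro t hts htf
      have := htf.to_subtype
      have hφ : ∀ s : t, ∃ a, g a = s.1 := fun s => hts s.2
      choose φ hφ using hφ
      have ht' : (Set.range φ).Finite := Set.finite_range φ
      have himg : g '' Set.range φ = t := by
        apply Set.Subset.antisymm
        · rintro _ ⟨a, ⟨s, rfl⟩, rfl⟩
          rw [hφ s]; exact s.2
        · intro s hs
          exact ⟨φ ⟨s, hs⟩, ⟨⟨s, hs⟩, rfl⟩, hφ ⟨s, hs⟩⟩
      have hF : (Sum.inl ⁻¹' Set.range φ : Set lam.out).Finite :=
        ht'.preimage Sum.inl_injective.injOn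
      have hUs : (Sum.inr ⁻¹' Set.range φ :
          Set {U : Set X // U ∈ nhds x}).Finite :=
        ht'.preimage Sum.inr_injective.injOn
      have hUmem : (⋂ U ∈ Sum.inr ⁻¹' Set.range φ,
          (U : {U : Set X // U ∈ nhds x}).1) ∈ nhds x :=
        (Filter.biInter_mem hUs).2 fun U _ => U.2
      obtain ⟨Z, hZF, hZU⟩ := key hF.toFinset _ hUmem
      refine ⟨Z, ?_⟩
      rw [Set.mem_sInter]
      intro s hs
      rw [← himg] at hs
      obtain ⟨a, hat, rfl⟩ := hs
      cases a with
      | inl α =>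
        exact hZF (by simpa using hat)
      | inr U =>
        obtain ⟨y, hyO, hyU⟩ := hZU
        have hsub : (⋂ V ∈ Sum.inr ⁻¹' Set.range φ,
            (V : {U : Set X // U ∈ nhds x}).1) ⊆ U.1 :=
          biInter_subset_of_mem (show U ∈ Sum.inr ⁻¹' Set.range φ from hat)
        exact ⟨y, hyO, hsub hyU⟩
    have hne : Filter.NeBot (Filter.generate (Set.range g)) :=
      Filter.generate_neBot_iff.2 hFIP
    refine ⟨Ultrafilter.of (Filter.generate (Set.range g)), fun α => ?_, x, fun U hU => ?_⟩
    · exact Filter.le_def.mp (Ultrafilter.of_le _) _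
        (Filter.GenerateSets.basic ⟨Sum.inl α, rfl⟩)
    · exact Filter.le_def.mp (Ultrafilter.of_le _) _
        (Filter.GenerateSets.basic ⟨Sum.inr ⟨U, hU⟩, rfl⟩)
  · -- backward direction
    intro h C hC hcap
    choose O hO1 hO2 hO3 using hcap
    obtain ⟨D, hD, x, hx⟩ := h (fun Z => O Z.1 Z.2) (fun Z => ⟨hO1 _ _, hO2 _ _⟩)
    refine ⟨x, mem_iInter.2 fun α => ?_⟩
    by_contra hxC
    have hU : (C α)ᶜ ∈ nhds x := (hC α).isOpen_compl.mem_nhds hxC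
    obtain ⟨Z, hZ1, hZ2⟩ := Ultrafilter.nonempty_of_mem
      (Filter.inter_mem (hx _ hU) (hD α))
    obtain ⟨y, hyO, hyC⟩ := hZ1
    exact hyC (mem_iInter₂.mp (hO3 Z.1 Z.2 hyO) α hZ2)
end

section
/- If D is a (μ,λ)-regular ultrafilter and X is a D-pseudocompact topological space, then X is O-[μ,λ]-compact. -/
open Cardinal Set

def DPseudocompact {I : Type*} (D : Ultrafilter I) (X : Type*) [TopologicalSpace X] : Prop :=
  ∀ O : I → Set X, (∀ i, IsOpen (O i) ∧ (O i).Nonempty) → ∃ x : X, IsDLimit D O x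

/-- `D` is a `(μ, λ)`-regular ultrafilter. -/
def IsMuLambdaRegular {I : Type*} (D : Ultrafilter I) (μ lam : Cardinal) : Prop :=
  ∃ f : I → {Z : Set lam.out // #Z < μ}, ∀ α : lam.out, {i | α ∈ (f i).1} ∈ D

theorem stmt8 {I : Type*} (D : Ultrafilter I) (X : Type*) [TopologicalSpace X]
    (μ lam : Cardinal) (hμ : ℵ₀ ≤ μ) (hml : μ ≤ lam)
    (hreg : IsMuLambdaRegular D μ lam) (h : DPseudocompact D X) :
    OCompact X μ lam := by
  intro C hC hsmall
  obtain ⟨f, hf⟩ := hreg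
  choose O hO hOne hOsub using fun i => hsmall (f i).1 (f i).2
  obtain ⟨x, hx⟩ := h O fun i => ⟨hO i, hOne i⟩
  refine ⟨x, mem_iInter.2 fun α => ?_⟩
  by_contra hxC
  have hU : (C α)ᶜ ∈ nhds x := (hC α).isOpen_compl.mem_nhds hxC
  have := (D.inter_mem (hx _ hU) (hf α))
  obtain ⟨i, ⟨y, hyO, hyU⟩, hαf⟩ := D.nonempty_of_mem this
  exact hyU (mem_iInter₂.1 (hOsub i hyO) α hαf)
end

section
/- Let D be an ultrafilter over a set I and X a topological space. Then X is D-pseudocompact if and only if for every I-indexed family (O_i)_{i∈I} of nonempty open sets of X, setting C_Z = closure(⋃_{i∈Z} O_i) for each Z ∈ D, one has ⋂_{Z∈D} C_Z ≠ ∅. -/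
open Set

theorem stmt9 {I : Type*} (D : Ultrafilter I) (X : Type*) [TopologicalSpace X] :
    DPseudocompact D X ↔
      ∀ O : I → Set X, (∀ i, IsOpen (O i) ∧ (O i).Nonempty) →
        (⋂ Z : {Z : Set I // Z ∈ D}, closure (⋃ i ∈ Z.1, O i)).Nonempty := by
  constructor
  · intro h O hO
    obtain ⟨x, hx⟩ := h O hO
    refine ⟨x, ?_⟩
    rw [mem_iInter]
    rintro ⟨Z, hZ⟩
    rw [mem_closure_iff]
    intro U hU hxU
    have hmem := hx U (hU.mem_nhds hxU)
    obtain ⟨i, hi, hiZ⟩ := Filter.nonempty_of_mem (D.toFilter.inter_mem hmem hZ)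
    obtain ⟨y, hy⟩ := hi
    exact ⟨y, hy.2, mem_biUnion hiZ hy.1⟩
  · intro h O hO
    obtain ⟨x, hx⟩ := h O hO
    refine ⟨x, ?_⟩
    intro U hU
    by_contra hc
    have hcompl : {i | (O i ∩ U).Nonempty}ᶜ ∈ D := Ultrafilter.compl_mem_iff_notMem.mpr hc
    have hx' : x ∈ closure (⋃ i ∈ {i | (O i ∩ U).Nonempty}ᶜ, O i) := by
      have := mem_iInter.mp hx ⟨_, hcompl⟩
      exact this
    obtain ⟨V, hVU, hVo, hxV⟩ := mem_nhds_iff.mp hU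
    obtain ⟨y, hyV, hy⟩ := (mem_closure_iff.mp hx') V hVo hxV
    obtain ⟨i, hi, hyi⟩ := mem_iUnion₂.mp hy
    exact hi ⟨y, hyi, hVU hyV⟩
end

section
/- Let D be an ultrafilter over a set I and X a topological space. Then X is D-pseudocompact if and only if for every D-indexed family (C_Z)_{Z∈D} of closed sets of X with the property that for every i ∈ I, the set ⋂_{Z∈D, i∈Z} C_Z contains some nonempty open set of X, one has ⋂_{Z∈D} C_Z ≠ ∅. -/
open Set

theorem stmt10 {I : Type*} (D : Ultrafilter I) (X : Type*) [TopologicalSpace X] :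
    DPseudocompact D X ↔
      ∀ C : {Z : Set I // Z ∈ D} → Set X, (∀ Z, IsClosed (C Z)) →
        (∀ i : I, ∃ O : Set X, IsOpen O ∧ O.Nonempty ∧
          O ⊆ ⋂ (Z : {Z : Set I // Z ∈ D}) (_ : i ∈ Z.1), C Z) →
        (⋂ Z, C Z).Nonempty := by
  constructor
  · intro hpc C hcl hO
    choose O hOopen hOne hOsub using hO
    obtain ⟨x, hx⟩ := hpc O (fun i => ⟨hOopen i, hOne i⟩)
    refine ⟨x, mem_iInter.2 fun Z => ?_⟩
    by_contra hxC
    have hU : (C Z)ᶜ ∈ nhds x := (hcl Z).isOpen_compl.mem_nhds hxC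
    have h1 := hx _ hU
    have h2 : ({i | (O i ∩ (C Z)ᶜ).Nonempty} ∩ Z.1 : Set I) ∈ D := D.inter_mem h1 Z.2
    obtain ⟨i, hi1, hi2⟩ := D.nonempty_of_mem h2
    obtain ⟨y, hyO, hyC⟩ := hi1
    exact hyC (mem_iInter₂.1 (hOsub i hyO) Z hi2)
  · intro h O hO
    set C : {Z : Set I // Z ∈ D} → Set X := fun Z => closure (⋃ i ∈ Z.1, O i) with hC
    have key : (⋂ Z, C Z).Nonempty := by
      refine h C (fun Z => isClosed_closure) fun i => ⟨O i, (hO i).1, (hO i).2, ?_⟩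
      intro y hy
      refine mem_iInter₂.2 fun Z hiZ => subset_closure ?_
      exact mem_biUnion hiZ hy
    obtain ⟨x, hx⟩ := key
    refine ⟨x, fun U hU => ?_⟩
    by_contra hne
    have hZ : {i | (O i ∩ U).Nonempty}ᶜ ∈ D := (D.compl_mem_iff_notMem).2 hne
    have hx' : x ∈ C ⟨_, hZ⟩ := mem_iInter.1 hx _
    obtain ⟨V, hVU, hVopen, hxV⟩ := mem_nhds_iff.1 hU
    obtain ⟨y, hy1, hy2⟩ := (mem_closure_iff.1 hx') V hVopen hxV
    obtain ⟨i, hi, hyO⟩ := mem_iUnion₂.1 hy2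
    exact hi ⟨y, hyO, hVU hy1⟩
end

section
/- Let D be an ultrafilter over a set I and X a topological space. Then X is D-pseudocompact if and only if for every open cover (Q_Z)_{Z∈D} of X indexed by the members of D, there is some i ∈ I such that ⋃_{Z∈D, i∈Z} Q_Z is dense in X. -/
open Set

theorem stmt11 {I : Type*} (D : Ultrafilter I) (X : Type*) [TopologicalSpace X] :
    DPseudocompact D X ↔
      ∀ Q : {Z : Set I // Z ∈ D} → Set X, (∀ Z, IsOpen (Q Z)) →
        (⋃ Z, Q Z) = Set.univ →
        ∃ i : I, Dense (⋃ (Z : {Z : Set I // Z ∈ D}) (_ : i ∈ Z.1), Q Z) := by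
  constructor
  · intro hpc Q hQopen hcov
    by_contra h
    push_neg at h
    have h' : ∀ i : I, ∃ V : Set X, IsOpen V ∧ V.Nonempty ∧
        ∀ Z : {Z : Set I // Z ∈ D}, i ∈ Z.1 → V ∩ Q Z = ∅ := by
      intro i
      have hi := h i
      rw [dense_iff_inter_open] at hi
      push_neg at hi
      obtain ⟨U, hU, hUne, hdisj⟩ := hi
      refine ⟨U, hU, hUne, fun Z hZ => ?_⟩
      have hsub : Q Z ⊆ ⋃ (Z' : {Z : Set I // Z ∈ D}) (_ : i ∈ Z'.1), Q Z' :=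
        Set.subset_iUnion₂ (s := fun Z' (_ : i ∈ Z'.1) => Q Z') Z hZ
      apply Set.eq_empty_of_subset_empty
      calc U ∩ Q Z ⊆ U ∩ ⋃ (Z' : {Z : Set I // Z ∈ D}) (_ : i ∈ Z'.1), Q Z' :=
            Set.inter_subset_inter_right U hsub
        _ = ∅ := hdisj
    choose V hVopen hVne hVdisj using h'
    obtain ⟨x, hx⟩ := hpc V (fun i => ⟨hVopen i, hVne i⟩)
    have hxU : x ∈ ⋃ Z, Q Z := hcov ▸ Set.mem_univ x
    obtain ⟨_, ⟨Z, rfl⟩, hxQ⟩ := hxU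
    have hmem : {i | (V i ∩ Q Z).Nonempty} ∈ D := hx (Q Z) ((hQopen Z).mem_nhds hxQ)
    obtain ⟨i, hi1, hi2⟩ := Filter.nonempty_of_mem (Filter.inter_mem hmem Z.2)
    have hi1' : (V i ∩ Q Z).Nonempty := hi1
    rw [hVdisj i Z hi2] at hi1'
    exact Set.not_nonempty_empty hi1'
  · intro h O hO
    by_contra hno
    push_neg at hno
    set Q : {Z : Set I // Z ∈ D} → Set X := fun Z => (closure (⋃ i ∈ Z.1, O i))ᶜ with hQ
    have hQopen : ∀ Z, IsOpen (Q Z) := fun Z => isClosed_closure.isOpen_compl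
    have hcov : (⋃ Z, Q Z) = Set.univ := by
      rw [Set.eq_univ_iff_forall]
      intro x
      have hx := hno x
      unfold IsDLimit at hx
      push_neg at hx
      obtain ⟨U, hU, hnotD⟩ := hx
      have hZ : ({i | (O i ∩ U).Nonempty})ᶜ ∈ D := Ultrafilter.compl_mem_iff_notMem.2 hnotD
      refine Set.mem_iUnion.2 ⟨⟨_, hZ⟩, ?_⟩
      simp only [hQ, Set.mem_compl_iff]
      intro hcl
      rw [mem_closure_iff] at hcl
      obtain ⟨y, hy1, hy2⟩ := hcl (interior U) isOpen_interior (mem_interior_iff_mem_nhds.2 hU)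
      obtain ⟨i, hi, hyO⟩ := Set.mem_iUnion₂.1 hy2
      exact hi ⟨y, hyO, interior_subset hy1⟩
    obtain ⟨i, hdense⟩ := h Q hQopen hcov
    obtain ⟨x, hxO, hxU⟩ := hdense.inter_open_nonempty (O i) (hO i).1 (hO i).2
    obtain ⟨Z, hiZ, hxQ⟩ := Set.mem_iUnion₂.1 hxU
    exact hxQ (subset_closure (Set.mem_biUnion hiZ hxO))
end

section
/- If X and Y are topological spaces, f : X → Y is continuous and surjective, and X is O-[μ,λ]-compact, then Y is O-[μ,λ]-compact. -/
open Cardinal Set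

theorem stmt13 {X Y : Type*} [TopologicalSpace X] [TopologicalSpace Y]
    (μ lam : Cardinal) (hμ : ℵ₀ ≤ μ) (hml : μ ≤ lam)
    (f : X → Y) (hf : Continuous f) (hsurj : Function.Surjective f)
    (h : OCompact X μ lam) : OCompact Y μ lam := by
  intro C hC hZ
  have key : ∀ Z : Set lam.out, #Z < μ →
      ∃ O : Set X, IsOpen O ∧ O.Nonempty ∧ O ⊆ ⋂ α ∈ Z, f ⁻¹' C α := by
    intro Z hZcard
    obtain ⟨O, hO, ⟨y, hy⟩, hsub⟩ := hZ Z hZcard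
    refine ⟨f ⁻¹' O, hO.preimage hf, ?_, ?_⟩
    · obtain ⟨x, rfl⟩ := hsurj y
      exact ⟨x, hy⟩
    · intro x hx
      simp only [mem_iInter, mem_preimage]
      intro α hα
      have := hsub hx
      simp only [mem_iInter] at this
      exact this α hα
  obtain ⟨x, hx⟩ := h (fun α => f ⁻¹' C α) (fun α => (hC α).preimage hf) key
  refine ⟨f x, ?_⟩
  simp only [mem_iInter, mem_preimage] at hx ⊢
  exact hx
end

section
/- Let X, Y be topological spaces, f : X → Y continuous, F a family of subsets of X, G a family of subsets of Y such that for every G₀ ∈ G there is F₀ ∈ F with F₀ ⊆ f⁻¹(G₀). If X is F-[μ,λ]-compact then Y is G-[μ,λ]-compact. -/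
open Cardinal Set

/-- `X` is `F`-`[μ, λ]`-compact relative to a family `F` of subsets of `X`. -/
def FCompact (X : Type*) [TopologicalSpace X] (F : Set (Set X)) (μ lam : Cardinal) : Prop :=
  ∀ C : lam.out → Set X, (∀ α, IsClosed (C α)) →
    (∀ Z : Set lam.out, #Z < μ → ∃ F₀ ∈ F, F₀ ⊆ ⋂ α ∈ Z, C α) →
    (⋂ α, C α).Nonempty

theorem stmt14 {X Y : Type*} [TopologicalSpace X] [TopologicalSpace Y]
    (μ lam : Cardinal) (hμ : ℵ₀ ≤ μ) (hml : μ ≤ lam)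
    (f : X → Y) (hf : Continuous f)
    (F : Set (Set X)) (G : Set (Set Y))
    (hFG : ∀ G₀ ∈ G, ∃ F₀ ∈ F, F₀ ⊆ f ⁻¹' G₀)
    (h : FCompact X F μ lam) : FCompact Y G μ lam := by
  intro C hC hZ
  have key : ∀ Z : Set lam.out, #Z < μ → ∃ F₀ ∈ F, F₀ ⊆ ⋂ α ∈ Z, f ⁻¹' C α := by
    intro Z hZμ
    obtain ⟨G₀, hG₀, hsub⟩ := hZ Z hZμ
    obtain ⟨F₀, hF₀, hF₀sub⟩ := hFG G₀ hG₀
    refine ⟨F₀, hF₀, fun x hxF => mem_iInter₂.2 fun α hα => ?_⟩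
    exact mem_iInter₂.1 (hsub (hF₀sub hxF)) α hα
  obtain ⟨x, hx⟩ := h (fun α => f ⁻¹' C α) (fun α => (hC α).preimage hf) key
  exact ⟨f x, mem_iInter.2 fun α => mem_iInter.1 hx α⟩
end

section
/- Let X, Y be topological spaces, f : X → Y continuous, D an ultrafilter over a set I, F a family of subsets of X, and G a family of subsets of Y such that for every G₀ ∈ G there is F₀ ∈ F with F₀ ⊆ f⁻¹(G₀). If X is F-D-compact then Y is G-D-compact. -/
open Set

/-- `X` is `F`-`D`-compact. -/
def FDCompact {I : Type*} (D : Ultrafilter I) (X : Type*) [TopologicalSpace X]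
    (F : Set (Set X)) : Prop :=
  ∀ s : I → Set X, (∀ i, s i ∈ F) → ∃ x : X, IsDLimit D s x

theorem stmt15 {I X Y : Type*} [TopologicalSpace X] [TopologicalSpace Y]
    (D : Ultrafilter I) (f : X → Y) (hf : Continuous f)
    (F : Set (Set X)) (G : Set (Set Y))
    (hFG : ∀ G₀ ∈ G, ∃ F₀ ∈ F, F₀ ⊆ f ⁻¹' G₀)
    (h : FDCompact D X F) : FDCompact D Y G := by
  intro s hs
  choose t ht hsub using fun i => hFG (s i) (hs i)
  obtain ⟨x, hx⟩ := h t ht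
  refine ⟨f x, fun U hU => ?_⟩
  have h1 := hx (f ⁻¹' U) (hf.continuousAt.preimage_mem_nhds hU)
  refine Filter.mem_of_superset h1 fun i ⟨z, hz1, hz2⟩ => ⟨f z, hsub i hz1, hz2⟩
end

section
/- Let D be an ultrafilter over a set I and X a topological space. Then X is D-compact if and only if for every family (C_Z)_{Z∈D} of closed sets of X such that for every i ∈ I the intersection ⋂_{Z∈D, i∈Z} C_Z is nonempty, one has ⋂_{Z∈D} C_Z ≠ ∅. -/
open Set

/-- `X` is `D`-compact: every `I`-indexed sequence of points has a `D`-limit point. -/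
def DCompact {I : Type*} (D : Ultrafilter I) (X : Type*) [TopologicalSpace X] : Prop :=
  ∀ x : I → X, ∃ y : X, ∀ U ∈ nhds y, {i | x i ∈ U} ∈ D

theorem stmt16 {I : Type*} (D : Ultrafilter I) (X : Type*) [TopologicalSpace X] :
    DCompact D X ↔
      ∀ C : {Z : Set I // Z ∈ D} → Set X, (∀ Z, IsClosed (C Z)) →
        (∀ i : I, (⋂ (Z : {Z : Set I // Z ∈ D}) (_ : i ∈ Z.1), C Z).Nonempty) →
        (⋂ Z, C Z).Nonempty := by
  constructor
  · intro h C hcl hne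
    -- choose x i ∈ ⋂_{Z ∋ i} C Z
    choose x hx using hne
    obtain ⟨y, hy⟩ := h x
    refine ⟨y, mem_iInter.2 fun Z => ?_⟩
    by_contra hyZ
    have hU : (C Z)ᶜ ∈ nhds y := (hcl Z).isOpen_compl.mem_nhds hyZ
    have h1 : {i | x i ∈ (C Z)ᶜ} ∈ D := hy _ hU
    obtain ⟨i, hi1, hi2⟩ := (D.nonempty_of_mem (D.inter_mem h1 Z.2))
    exact hi1 (mem_iInter₂.1 (hx i) Z hi2)
  · intro h x
    set C : {Z : Set I // Z ∈ D} → Set X := fun Z => closure (x '' Z.1) with hC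
    have hcl : ∀ Z, IsClosed (C Z) := fun Z => isClosed_closure
    have hne : ∀ i : I, (⋂ (Z : {Z : Set I // Z ∈ D}) (_ : i ∈ Z.1), C Z).Nonempty := by
      intro i
      exact ⟨x i, mem_iInter₂.2 fun Z hi => subset_closure ⟨i, hi, rfl⟩⟩
    obtain ⟨y, hy⟩ := h C hcl hne
    refine ⟨y, fun U hU => ?_⟩
    by_contra hmem
    have hW : {i | x i ∈ U}ᶜ ∈ D := Ultrafilter.compl_mem_iff_notMem.2 hmem
    have hyW : y ∈ C ⟨_, hW⟩ := mem_iInter.1 hy ⟨_, hW⟩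
    have hint : interior U ∈ nhds y := interior_mem_nhds.2 hU
    obtain ⟨z, hz1, hz2⟩ := mem_closure_iff_nhds.1 hyW _ hint
    obtain ⟨i, hi, rfl⟩ := hz2
    exact hi (interior_subset (s := U) hz1)
end

section
/- Let D be an ultrafilter over a set I and X a topological space. Then X is D-compact if and only if for every open cover (O_Z)_{Z∈D} of X indexed by members of D, there is some i ∈ I such that (O_Z)_{Z∈D, i∈Z} is already a cover of X. -/
open Set

theorem stmt17 {I : Type*} (D : Ultrafilter I) (X : Type*) [TopologicalSpace X] :
    DCompact D X ↔
      ∀ O : {Z : Set I // Z ∈ D} → Set X, (∀ Z, IsOpen (O Z)) →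
        (⋃ Z, O Z) = Set.univ →
        ∃ i : I, (⋃ (Z : {Z : Set I // Z ∈ D}) (_ : i ∈ Z.1), O Z) = Set.univ := by
  constructor
  · intro h O hOpen hcov
    by_contra hc
    push_neg at hc
    choose x hx using fun i => (ne_univ_iff_exists_notMem _).mp (hc i)
    obtain ⟨y, hy⟩ := h x
    have hyU : y ∈ ⋃ Z, O Z := hcov ▸ mem_univ y
    obtain ⟨Z, hyZ⟩ := mem_iUnion.mp hyU
    have h1 : {i | x i ∈ O Z} ∈ D := hy _ ((hOpen Z).mem_nhds hyZ)
    have h2 : ({i | x i ∈ O Z} ∩ Z.1 : Set I) ∈ D := Filter.inter_mem h1 Z.2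
    obtain ⟨i, hi1, hi2⟩ := Filter.nonempty_of_mem (f := (D : Filter I)) h2
    exact hx i (mem_iUnion₂.mpr ⟨Z, hi2, hi1⟩)
  · intro h x
    by_contra hc
    push_neg at hc
    set O : {Z : Set I // Z ∈ D} → Set X := fun Z => ⋃₀ {U | IsOpen U ∧ ∀ i ∈ Z.1, x i ∉ U}
      with hO
    have hOpen : ∀ Z, IsOpen (O Z) := fun Z => isOpen_sUnion fun U hU => hU.1
    have hcov : (⋃ Z, O Z) = univ := by
      ext y
      simp only [mem_univ, iff_true, mem_iUnion]
      obtain ⟨U, hU, hUD⟩ := hc y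
      obtain ⟨V, hVU, hV, hyV⟩ := mem_nhds_iff.mp hU
      have hVD : {i | x i ∈ V} ∉ D := fun hm =>
        hUD (D.1.sets_of_superset hm fun i hi => hVU hi)
      have hZ : {i | x i ∉ V} ∈ D := by
        have := (D.compl_mem_iff_notMem (s := {i | x i ∈ V})).mpr hVD
        simpa [compl_setOf] using this
      exact ⟨⟨{i | x i ∉ V}, hZ⟩, V, ⟨hV, fun i hi => hi⟩, hyV⟩
    obtain ⟨i, hi⟩ := h O hOpen hcov
    have hxi : x i ∈ ⋃ (Z : {Z : Set I // Z ∈ D}) (_ : i ∈ Z.1), O Z := hi ▸ mem_univ _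
    obtain ⟨Z, hiZ, hmem⟩ := mem_iUnion₂.mp hxi
    obtain ⟨U, ⟨hUopen, hUnot⟩, hxU⟩ := hmem
    exact hUnot i hiZ hxU
end

section
/- Every O-[cf(λ), cf(λ)]-compact topological space is O-[λ,λ]-compact, where cf(λ) denotes the cofinality of the infinite cardinal λ. -/
open Cardinal Set

/-!
Fix a cofinal subset `S` of the well-order `λ.ord.ToType` with `|S| = cf λ`, and group the closed
sets `C α` into the blocks `D s = ⋂_{α ≤ s} C α` for `s ∈ S`. Fewer than `cf λ` elements of `S` have
a common strict upper bound in `λ`, so the blocks they index together involve fewer than `λ` of the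
`C α`; thus the `D s` satisfy the hypothesis of `O-[cf λ, cf λ]`-compactness, and
`⋂ D s = ⋂ C α` because `S` is cofinal.
-/

universe u v

def OCompactOver (X : Type u) [TopologicalSpace X] (μ : Cardinal.{v}) (ι : Type v) : Prop :=
  ∀ C : ι → Set X, (∀ i, IsClosed (C i)) →
    (∀ Z : Set ι, #Z < μ → ∃ O : Set X, IsOpen O ∧ O.Nonempty ∧ O ⊆ ⋂ i ∈ Z, C i) →
    (⋂ i, C i).Nonempty

namespace OCompactOver

variable {X : Type u} [TopologicalSpace X] {μ ν : Cardinal.{v}} {ι κ : Type v}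

theorem of_equiv (e : ι ≃ κ) (h : OCompactOver X μ ι) : OCompactOver X μ κ := by
  intro C hC hopen
  rw [← e.surjective.iInter_comp]
  refine h (C ∘ e) (fun i => hC (e i)) fun Z hZ => ?_
  obtain ⟨O, hO, hOne, hOsub⟩ := hopen (e '' Z) (by rwa [mk_image_eq e.injective])
  exact ⟨O, hO, hOne, hOsub.trans_eq (biInter_image ..)⟩

theorem of_cover (h : OCompactOver X ν κ) (Z : κ → Set ι) (hcover : ⋃ k, Z k = Set.univ)
    (hsmall : ∀ W : Set κ, #W < ν → #(⋃ k ∈ W, Z k) < μ) : OCompactOver X μ ι := by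
  intro C hC hopen
  obtain ⟨x, hx⟩ := h (fun k => ⋂ i ∈ Z k, C i) (fun k => isClosed_biInter fun i _ => hC i)
    fun W hW => by simpa only [biInter_iUnion] using hopen _ (hsmall W hW)
  refine ⟨x, mem_iInter.2 fun i => ?_⟩
  obtain ⟨k, hk⟩ := mem_iUnion.1 (hcover.symm ▸ mem_univ i : i ∈ ⋃ k, Z k)
  exact mem_iInter₂.1 (mem_iInter.1 hx k) i hk

end OCompactOver

theorem oCompact_iff_oCompactOver {X : Type u} [TopologicalSpace X] {μ lam : Cardinal.{v}}
    {ι : Type v} (hι : #ι = lam) : OCompact X μ lam ↔ OCompactOver X μ ι := by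
  obtain ⟨e⟩ : Nonempty (lam.out ≃ ι) := Cardinal.eq.1 (by rw [mk_out, hι])
  exact ⟨OCompactOver.of_equiv e, OCompactOver.of_equiv e.symm⟩

section Cofinality

variable {α : Type u} [LinearOrder α]

theorem exists_forall_lt_of_mk_lt_cof {s : Set α} (hs : #s < Order.cof α) :
    ∃ x, ∀ y ∈ s, y < x :=
  not_isCofinal_iff.1 fun hcof => (Order.cof_le hcof).not_gt hs

theorem mk_biUnion_Iic_lt_of_lt_cof {ι : Type u} {c : Cardinal.{u}}
    (hIio : ∀ x : α, #(Iio x) < c) (f : ι → α) {W : Set ι} (hW : #W < Order.cof α) :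
    #(⋃ i ∈ W, Iic (f i)) < c := by
  obtain ⟨x, hx⟩ := exists_forall_lt_of_mk_lt_cof (mk_image_le.trans_lt hW)
  refine (mk_le_mk_of_subset ?_).trans_lt (hIio x)
  exact iUnion₂_subset fun i hi => Iic_subset_Iio.2 (hx _ (mem_image_of_mem f hi))

end Cofinality

theorem stmt18_general (X : Type*) [TopologicalSpace X] (lam : Cardinal)
    (h : OCompact X lam.ord.cof lam.ord.cof) :
    OCompact X lam lam := by
  obtain ⟨S, hS, hScard⟩ := Order.exists_cof_eq lam.ord.ToType
  rw [Ordinal.cof_toType] at hScard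
  have hα : #lam.ord.ToType = lam := by simp
  have hIio (x : lam.ord.ToType) : #(Iio x) < lam := by simpa using mk_Iio_lt x
  rw [oCompact_iff_oCompactOver hα]
  refine ((oCompact_iff_oCompactOver hScard).1 h).of_cover (fun s => Iic s) ?_ fun W hW => ?_
  · simpa [iUnion_subtype] using isCofinal_iff_iUnion_Iic_eq_univ.1 hS
  · exact mk_biUnion_Iic_lt_of_lt_cof hIio _ (by rwa [Ordinal.cof_toType])

theorem stmt18 (X : Type*) [TopologicalSpace X] (lam : Cardinal)
    (hlam : ℵ₀ ≤ lam)
    (h : OCompact X lam.ord.cof lam.ord.cof) :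
    OCompact X lam lam :=
  stmt18_general X lam h
end
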